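/- Let (H_i)_{i≥1} be i.i.d. positive-integer-valued random variables, (G_j)_{j≥1} i.i.d. geometric(y) with ℙ(G = g) = y(1−y)^{g−1} (g ≥ 1), y ∈ (0,1), independent of (H_i). Set S_0 := 0, S_j := G_1 + ⋯ + G_j, and M_j := max{H_i : S_{j−1} < i ≤ S_j}. Let T ≥ 1 be an integer with 0 < ℙ(M_1 ≤ T) < 1. Then for every integer n ≥ 1 and every x_1, …, x_{n−1} ∈ {1, …, T}: ℙ(M_j = x_j for all 1 ≤ j ≤ n−1, and M_n > T) = ℙ(M_1 > T) · ∏_{j=1}^{n−1} ℙ(M_1 = x_j). -/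

import Mathlib

/-!
Condition on the whole sequence of block sizes `G = g`. The block maxima are then maxima of the
i.i.d. sequence `H` over disjoint deterministic blocks, hence independent, and by shift invariance
of the law of `H` the maximum over a block of length `k` is distributed as `max(H_1, …, H_k)`.
This gives `ℙ(M_j ∈ s_j, j ≤ m) = 𝔼[∏_j φ_j(G_j)]` with `φ_j(k) = ℙ(max(H_1, …, H_k) ∈ s_j)`,
which factorizes because the `G_j` are i.i.d.; the case `m = 1` identifies each factor
`𝔼[φ_j(G_1)]` with `ℙ(M_1 ∈ s_j)`.
-/

open MeasureTheory ProbabilityTheory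

namespace ProbabilityTheory

variable {Ω ι κ β : Type*} [MeasurableSpace Ω] [MeasurableSpace β] {P : Measure Ω}
  {X : ι → Ω → β}

lemma iIndepFun.blocks_of_injective {J : κ → Type*} {e : (Σ k, J k) → ι} (he : e.Injective)
    (hX : iIndepFun X P) (mX : ∀ i, Measurable (X i)) :
    iIndepFun (fun k ω (j : J k) => X (e ⟨k, j⟩) ω) P := by
  have := hX.isProbabilityMeasure
  have _ i := Measure.isProbabilityMeasure_map (μ := P) (mX i).aemeasurable
  -- The joint law is a product over the sigma type; currying regroups it block by block.
  have hcurry : (fun ω k (j : J k) => X (e ⟨k, j⟩) ω)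
      = MeasurableEquiv.piCurry (fun k (_ : J k) => β) ∘ fun ω p => X (e p) ω := by
    ext; simp [Sigma.curry]
  rw [iIndepFun_iff_map_fun_eq_infinitePi_map (by fun_prop), hcurry,
    ← Measure.map_map (by fun_prop) (by fun_prop),
    (hX.precomp he).map_fun_eq_infinitePi_map (fun p => mX (e p)),
    Measure.infinitePi_map_piCurry (fun k (j : J k) => P.map (X (e ⟨k, j⟩)))]
  congrm Measure.infinitePi fun k => ?_
  exact ((hX.precomp (he.comp sigma_mk_injective)).map_fun_eq_infinitePi_map
    (fun j => mX _)).symm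

lemma iIndepFun.identDistrib_precomp {f : ι → ι} (hf : f.Injective) (hX : iIndepFun X P)
    (mX : ∀ i, Measurable (X i)) (hXf : ∀ i, IdentDistrib (X (f i)) (X i) P P) :
    IdentDistrib (fun ω i => X (f i) ω) (fun ω i => X i ω) P P where
  aemeasurable_fst := (measurable_pi_lambda _ fun i => mX (f i)).aemeasurable
  aemeasurable_snd := (measurable_pi_lambda _ mX).aemeasurable
  map_eq := by
    have := hX.isProbabilityMeasure
    have _ i := Measure.isProbabilityMeasure_map (μ := P) (mX i).aemeasurable
    rw [(hX.precomp hf).map_fun_eq_infinitePi_map (fun i => mX (f i)),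
      hX.map_fun_eq_infinitePi_map mX]
    congrm Measure.infinitePi fun i => ?_
    exact (hXf i).map_eq

lemma IndepFun.measure_mem_eq_lintegral {α γ : Type*} [MeasurableSpace α] [MeasurableSpace γ]
    [IsFiniteMeasure P] {X : Ω → α} {Y : Ω → γ} (hXY : IndepFun X Y P) (hX : Measurable X)
    (hY : Measurable Y) {A : Set (α × γ)} (hA : MeasurableSet A) :
    P {ω | (X ω, Y ω) ∈ A} = ∫⁻ ω, P {ω' | (X ω', Y ω) ∈ A} ∂P := by
  have hmap := (indepFun_iff_map_prod_eq_prod_map_map hX.aemeasurable hY.aemeasurable).mp hXY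
  calc P {ω | (X ω, Y ω) ∈ A} = (P.map X).prod (P.map Y) A := by
        rw [← hmap, Measure.map_apply (hX.prodMk hY) hA]; rfl
    _ = ∫⁻ y, P.map X ((·, y) ⁻¹' A) ∂(P.map Y) := Measure.prod_apply_symm hA
    _ = ∫⁻ ω, P {ω' | (X ω', Y ω) ∈ A} ∂P := by
        rw [lintegral_map (measurable_measure_prodMk_right hA) hY]
        congr with ω
        rw [Measure.map_apply hX (measurable_prodMk_right hA)]
        rfl

end ProbabilityTheory

lemma measurable_finset_sup {ι β : Type*} [MeasurableSpace β] [Countable β]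
    [MeasurableSingletonClass β] [SemilatticeSup β] [OrderBot β] (s : Finset ι) :
    Measurable fun h : ι → β => s.sup h := by
  have hsup : (fun h : ι → β => s.sup h) = (fun v : s → β => Finset.univ.sup v) ∘ s.restrict := by
    ext h
    rw [Function.comp_apply, Finset.univ_eq_attach]
    exact (Finset.sup_attach s h).symm
  rw [hsup]
  exact (measurable_of_countable _).comp (Finset.measurable_restrict s)

lemma Nat.sup_Ioc_eq_sup_Ioc_zero {β : Type*} [SemilatticeSup β] [OrderBot β] (h : ℕ → β)
    {a b : ℕ} (hab : a ≤ b) : (Finset.Ioc a b).sup h = (Finset.Ioc 0 (b - a)).sup (h <| · + a) := by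
  have hmap : (Finset.Ioc 0 (b - a)).map (addRightEmbedding a) = Finset.Ioc a b := by
    rw [Finset.map_add_right_Ioc, zero_add, Nat.sub_add_cancel hab]
  rw [← hmap, Finset.sup_map]
  rfl

/-- With branch lengths `h` and block sizes `g`, `blockEnd g j` is the paper's `S_j` and
`blockMax h g j` its `M_j` (for `j ≥ 1`). -/
def blockEnd (g : ℕ → ℕ) (j : ℕ) : ℕ := ∑ l ∈ Finset.Icc 1 j, g l

def blockMax (h g : ℕ → ℕ) (j : ℕ) : ℕ :=
  (Finset.Ioc (blockEnd g (j - 1)) (blockEnd g j)).sup h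

lemma blockEnd_mono (g : ℕ → ℕ) : Monotone (blockEnd g) := fun _ _ hab =>
  Finset.sum_le_sum_of_subset (Finset.Icc_subset_Icc_right hab)

lemma blockEnd_sub_blockEnd_sub_one (g : ℕ → ℕ) {j : ℕ} (hj : 1 ≤ j) :
    blockEnd g j - blockEnd g (j - 1) = g j := by
  obtain ⟨k, rfl⟩ := Nat.exists_eq_add_of_le' hj
  simp [blockEnd, Finset.sum_Icc_succ_top]

lemma measurable_blockEnd (j : ℕ) : Measurable fun g : ℕ → ℕ => blockEnd g j :=
  Finset.measurable_sum _ fun l _ => measurable_pi_apply l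

lemma measurable_blockMax (j : ℕ) :
    Measurable fun p : (ℕ → ℕ) × (ℕ → ℕ) => blockMax p.1 p.2 j := by
  have hsup : Measurable fun q : (ℕ → ℕ) × (ℕ × ℕ) => (Finset.Ioc q.2.1 q.2.2).sup q.1 :=
    measurable_from_prod_countable_left fun y => measurable_finset_sup (Finset.Ioc y.1 y.2)
  exact hsup.comp (measurable_fst.prodMk (((measurable_blockEnd _).comp measurable_snd).prodMk
    ((measurable_blockEnd _).comp measurable_snd)))

section BlockMaxima

variable {Ω : Type*} [MeasurableSpace Ω] {P : Measure Ω} {H G : ℕ → Ω → ℕ}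

lemma measure_sup_Ioc_mem_eq (hHmeas : ∀ i, Measurable (H i)) (hHindep : iIndepFun H P)
    (hHident : ∀ i, IdentDistrib (H i) (H 1) P P) {a b : ℕ} (hab : a ≤ b) (s : Set ℕ) :
    P {ω | (Finset.Ioc a b).sup (H · ω) ∈ s}
      = P {ω | (Finset.Ioc 0 (b - a)).sup (H · ω) ∈ s} := by
  have hshift := (hHindep.identDistrib_precomp (add_left_injective a) hHmeas
    fun i => (hHident (i + a)).trans (hHident i).symm).comp
      (measurable_finset_sup (Finset.Ioc 0 (b - a)))
  simp_rw [Nat.sup_Ioc_eq_sup_Ioc_zero _ hab]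
  exact hshift.measure_mem_eq .of_discrete

lemma iIndepFun_blockMax (hHmeas : ∀ i, Measurable (H i)) (hHindep : iIndepFun H P)
    (g : ℕ → ℕ) : iIndepFun (fun j ω => blockMax (H · ω) g j) P := by
  set block : ℕ → Finset ℕ := fun j => Finset.Ioc (blockEnd g (j - 1)) (blockEnd g j)
  have hle : ∀ {j j' i}, i ∈ block j → i ∈ block j' → j ≤ j' := by
    intro j j' i hi hi'
    by_contra! hlt
    have := blockEnd_mono g (Nat.le_sub_one_of_lt hlt)
    simp only [block, Finset.mem_Ioc] at hi hi'
    omega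
  have hinj : Function.Injective fun p : Σ j, block j => (p.2 : ℕ) := by
    rintro ⟨j, i, hi⟩ ⟨j', i', hi'⟩ (rfl : i = i')
    obtain rfl := le_antisymm (hle hi hi') (hle hi' hi)
    rfl
  have hsup : (fun j ω => blockMax (H · ω) g j)
      = fun j => (fun v : block j → ℕ => Finset.univ.sup v) ∘ fun ω (i : block j) => H i ω := by
    ext j ω
    rw [Function.comp_apply, Finset.univ_eq_attach]
    exact (Finset.sup_attach (block j) (H · ω)).symm
  rw [hsup]
  exact (hHindep.blocks_of_injective hinj hHmeas).comp _ fun _ => measurable_of_countable _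

lemma measure_forall_blockMax_mem (hHmeas : ∀ i, Measurable (H i)) (hHindep : iIndepFun H P)
    (hHident : ∀ i, IdentDistrib (H i) (H 1) P P) (g : ℕ → ℕ) (s : ℕ → Set ℕ) (m : ℕ) :
    P {ω | ∀ j ∈ Finset.Icc 1 m, blockMax (H · ω) g j ∈ s j}
      = ∏ j ∈ Finset.Icc 1 m, P {ω | (Finset.Ioc 0 (g j)).sup (H · ω) ∈ s j} := by
  have hprod := (iIndepFun_blockMax hHmeas hHindep g).measure_inter_preimage_eq_mul
    (Finset.Icc 1 m) (sets := s) fun _ _ => .of_discrete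
  convert hprod using 1
  · congr 1
    ext ω
    simp
  refine Finset.prod_congr rfl fun j hj => ?_
  rw [← blockEnd_sub_blockEnd_sub_one g (Finset.mem_Icc.mp hj).1,
    ← measure_sup_Ioc_mem_eq hHmeas hHindep hHident (blockEnd_mono g (Nat.sub_le j 1))]
  rfl

lemma measure_forall_blockMax_mem_eq_lintegral (hHmeas : ∀ i, Measurable (H i))
    (hHindep : iIndepFun H P) (hHident : ∀ i, IdentDistrib (H i) (H 1) P P)
    (hGmeas : ∀ j, Measurable (G j))
    (hHG : IndepFun (fun ω i => H i ω) (fun ω j => G j ω) P) (s : ℕ → Set ℕ) (m : ℕ) :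
    P {ω | ∀ j ∈ Finset.Icc 1 m, blockMax (H · ω) (G · ω) j ∈ s j}
      = ∫⁻ ω, ∏ j ∈ Finset.Icc 1 m, P {ω' | (Finset.Ioc 0 (G j ω)).sup (H · ω') ∈ s j} ∂P := by
  have := hHindep.isProbabilityMeasure
  have hA : MeasurableSet
      {p : (ℕ → ℕ) × (ℕ → ℕ) | ∀ j ∈ Finset.Icc 1 m, blockMax p.1 p.2 j ∈ s j} := by
    simp only [Set.ofPred_forall]
    exact Finset.measurableSet_biInter _ fun j _ => measurable_blockMax j .of_discrete
  refine (hHG.measure_mem_eq_lintegral (measurable_pi_lambda _ hHmeas)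
    (measurable_pi_lambda _ hGmeas) hA).trans (lintegral_congr fun ω => ?_)
  exact measure_forall_blockMax_mem hHmeas hHindep hHident (G · ω) s m

theorem measure_forall_blockMax_mem_eq_prod (hHmeas : ∀ i, Measurable (H i))
    (hHindep : iIndepFun H P) (hHident : ∀ i, IdentDistrib (H i) (H 1) P P)
    (hGmeas : ∀ j, Measurable (G j)) (hGindep : iIndepFun G P)
    (hGident : ∀ j, IdentDistrib (G j) (G 1) P P)
    (hHG : IndepFun (fun ω i => H i ω) (fun ω j => G j ω) P) (s : ℕ → Set ℕ) (m : ℕ) :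
    P {ω | ∀ j ∈ Finset.Icc 1 m, blockMax (H · ω) (G · ω) j ∈ s j}
      = ∏ j ∈ Finset.Icc 1 m, P {ω | blockMax (H · ω) (G · ω) 1 ∈ s j} := by
  set φ : ℕ → ℕ → ENNReal := fun j k => P {ω | (Finset.Ioc 0 k).sup (H · ω) ∈ s j}
  have hfirst : ∀ j, P {ω | blockMax (H · ω) (G · ω) 1 ∈ s j} = ∫⁻ ω, φ j (G 1 ω) ∂P :=
    fun j => by
      simpa using measure_forall_blockMax_mem_eq_lintegral hHmeas hHindep hHident hGmeas hHG
        (fun _ => s j) 1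
  rw [measure_forall_blockMax_mem_eq_lintegral hHmeas hHindep hHident hGmeas hHG,
    lintegral_prod_eq_prod_lintegral_of_indepFun _ (fun j ω => φ j (G j ω))
      (hGindep.comp φ fun j => measurable_of_countable (φ j))
      fun j => (measurable_of_countable (φ j)).comp (hGmeas j)]
  refine Finset.prod_congr rfl fun j _ => ?_
  rw [hfirst]
  exact ((hGident j).comp (measurable_of_countable (φ j))).lintegral_eq

end BlockMaxima

theorem stmt_5_general
    {Ω : Type*} [MeasurableSpace Ω] (P : Measure Ω)
    (H : ℕ → Ω → ℕ)
    (hHmeas : ∀ i, Measurable (H i))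
    (hHindep : iIndepFun H P)
    (hHident : ∀ i, IdentDistrib (H i) (H 1) P P)
    (G : ℕ → Ω → ℕ)
    (hGmeas : ∀ j, Measurable (G j))
    (hGindep : iIndepFun G P)
    (hGident : ∀ j, IdentDistrib (G j) (G 1) P P)
    (hHG : IndepFun (fun ω => fun i => H i ω) (fun ω => fun j => G j ω) P)
    (S : ℕ → Ω → ℕ) (hS : ∀ j ω, S j ω = ∑ l ∈ Finset.Icc 1 j, G l ω)
    (M : ℕ → Ω → ℕ)
    (hM : ∀ j, 1 ≤ j → ∀ ω, M j ω = (Finset.Ioc (S (j - 1) ω) (S j ω)).sup (fun i => H i ω))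
    (T : ℕ)
    (n : ℕ) (hn : 1 ≤ n)
    (x : ℕ → ℕ) :
    P {ω | (∀ j ∈ Finset.Icc 1 (n - 1), M j ω = x j) ∧ T < M n ω}
      = P {ω | T < M 1 ω} * ∏ j ∈ Finset.Icc 1 (n - 1), P {ω | M 1 ω = x j} := by
  obtain ⟨m, rfl⟩ : ∃ m, n = m + 1 := ⟨n - 1, by omega⟩
  have hMblock : ∀ j, 1 ≤ j → ∀ ω, M j ω = blockMax (H · ω) (G · ω) j := fun j hj ω => by
    simp only [hM j hj, hS]
    rfl
  set s : ℕ → Set ℕ := fun j => if j ≤ m then {x j} else Set.Ioi T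
  have hlast : m + 1 ∉ Finset.Icc 1 m := by simp
  have hIcc : Finset.Icc 1 (m + 1) = insert (m + 1) (Finset.Icc 1 m) :=
    (Finset.insert_Icc_right_eq_Icc_add_one (by omega)).symm
  have hevent : {ω | (∀ j ∈ Finset.Icc 1 m, M j ω = x j) ∧ T < M (m + 1) ω}
      = {ω | ∀ j ∈ Finset.Icc 1 (m + 1), blockMax (H · ω) (G · ω) j ∈ s j} := by
    ext ω
    simp only [Set.mem_ofPred_eq, hIcc, Finset.forall_mem_insert]
    rw [and_comm]
    refine and_congr (by simp [s, hMblock (m + 1) (by omega)]) (forall₂_congr fun j hj => ?_)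
    simp [s, (Finset.mem_Icc.mp hj).2, hMblock j (Finset.mem_Icc.mp hj).1]
  rw [Nat.add_sub_cancel, hevent, measure_forall_blockMax_mem_eq_prod hHmeas hHindep hHident
    hGmeas hGindep hGident hHG, hIcc, Finset.prod_insert hlast]
  congr 1
  · simp [s, hMblock 1 le_rfl]
  · refine Finset.prod_congr rfl fun j hj => ?_
    simp [s, (Finset.mem_Icc.mp hj).2, hMblock 1 le_rfl]

/-- For block maxima `M_j` (over i.i.d. geometric(y)-sized blocks) of i.i.d.
positive-integer-valued `(H_i)`, with `0 < ℙ(M_1 ≤ T) < 1`, one has for `x_1, …, x_{n-1} ∈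
{1, …, T}`: `ℙ(M_j = x_j for 1 ≤ j ≤ n-1, M_n > T) = ℙ(M_1 > T) ∏_{j=1}^{n-1} ℙ(M_1 = x_j)`. -/
theorem stmt_5
    {Ω : Type*} [MeasurableSpace Ω] (P : Measure Ω) [IsProbabilityMeasure P]
    (H : ℕ → Ω → ℕ)
    (hHmeas : ∀ i, Measurable (H i))
    (hHindep : iIndepFun H P)
    (hHident : ∀ i, IdentDistrib (H i) (H 1) P P)
    (hHpos : ∀ i ω, 1 ≤ H i ω)
    (y : ℝ) (hy : y ∈ Set.Ioo (0 : ℝ) 1)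
    (G : ℕ → Ω → ℕ)
    (hGmeas : ∀ j, Measurable (G j))
    (hGindep : iIndepFun G P)
    (hGident : ∀ j, IdentDistrib (G j) (G 1) P P)
    (hGpos : ∀ j ω, 1 ≤ G j ω)
    (hGgeom : ∀ g : ℕ, 1 ≤ g → (P {ω | G 1 ω = g}).toReal = y * (1 - y) ^ (g - 1))
    (hHG : IndepFun (fun ω => fun i => H i ω) (fun ω => fun j => G j ω) P)
    (S : ℕ → Ω → ℕ) (hS : ∀ j ω, S j ω = ∑ l ∈ Finset.Icc 1 j, G l ω)
    (M : ℕ → Ω → ℕ)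
    (hM : ∀ j, 1 ≤ j → ∀ ω, M j ω = (Finset.Ioc (S (j - 1) ω) (S j ω)).sup (fun i => H i ω))
    (T : ℕ) (hT : 1 ≤ T)
    (hT0 : 0 < P {ω | M 1 ω ≤ T}) (hT1 : P {ω | M 1 ω ≤ T} < 1)
    (n : ℕ) (hn : 1 ≤ n)
    (x : ℕ → ℕ) (hx : ∀ j ∈ Finset.Icc 1 (n - 1), x j ∈ Finset.Icc 1 T) :
    P {ω | (∀ j ∈ Finset.Icc 1 (n - 1), M j ω = x j) ∧ T < M n ω}
      = P {ω | T < M 1 ω} * ∏ j ∈ Finset.Icc 1 (n - 1), P {ω | M 1 ω = x j} :=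
  stmt_5_general P H hHmeas hHindep hHident G hGmeas hGindep hGident hHG S hS M hM T n hn x
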